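/- Let C be a monoidal category with unit object 𝟙, let e : 𝟙 ⟶ R₂ be a central morphism, let R₁ be a monoid object in C with unit η : 𝟙 ⟶ R₁ and multiplication μ : R₁ ⊗ R₁ ⟶ R₁, and let f : R₂ ⟶ R₁ be a morphism with e ≫ f = η (a unit-preserving map). Then (λ_{R₁})⁻¹ ≫ (e ▷ R₁) : R₁ ⟶ R₂ ⊗ R₁ is an isomorphism, with inverse (f ▷ R₁) ≫ μ. -/

import Mathlib

/-!
Write `u_X := (λ_ X).inv ≫ e ▷ X : X ⟶ R₂ ⊗ X`. The left unit law of `R₁` and `e ≫ f = η` give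
`u_{R₁} ≫ (f ▷ R₁ ≫ μ) = 𝟙`. Conversely, `u` is natural in `X`, and centrality of `e` (moved
through the associator) gives `u_{R₂ ⊗ X} = R₂ ◁ u_X`; hence any retraction `r` of `u_X` satisfies
`r ≫ u_X = u_{R₂ ⊗ X} ≫ R₂ ◁ r = R₂ ◁ (u_X ≫ r) = 𝟙`.
-/

open CategoryTheory MonoidalCategory

/-- A morphism `α : 𝟙 ⟶ A` in a monoidal category is central if
`α ⊗ id_A` and `id_A ⊗ α` agree up to the unitor identifications. -/
def IsCentral {C : Type*} [Category C] [MonoidalCategory C] {A : C}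
    (α : 𝟙_ C ⟶ A) : Prop :=
  (λ_ A).inv ≫ (α ▷ A) = (ρ_ A).inv ≫ (A ◁ α)

section

open scoped MonObj

variable {C : Type*} [Category C] [MonoidalCategory C]

theorem leftUnitor_inv_whiskerRight_naturality {A X Y : C} (α : 𝟙_ C ⟶ A) (g : X ⟶ Y) :
    g ≫ (λ_ Y).inv ≫ α ▷ Y = ((λ_ X).inv ≫ α ▷ X) ≫ A ◁ g := by
  rw [leftUnitor_inv_naturality_assoc, Category.assoc, whisker_exchange]

namespace IsCentral

variable {A : C} {α : 𝟙_ C ⟶ A}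

theorem leftUnitor_inv_whiskerRight_tensor (h : IsCentral α) (X : C) :
    (λ_ (A ⊗ X)).inv ≫ α ▷ (A ⊗ X) = A ◁ ((λ_ X).inv ≫ α ▷ X) := by
  rw [leftUnitor_tensor_inv_assoc, ← associator_naturality_left, ← comp_whiskerRight_assoc, h]
  simp

theorem comp_leftUnitor_inv_whiskerRight_eq_id (h : IsCentral α) {X : C} {r : A ⊗ X ⟶ X}
    (hr : ((λ_ X).inv ≫ α ▷ X) ≫ r = 𝟙 X) : r ≫ (λ_ X).inv ≫ α ▷ X = 𝟙 (A ⊗ X) :=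
  calc r ≫ (λ_ X).inv ≫ α ▷ X
      = ((λ_ (A ⊗ X)).inv ≫ α ▷ (A ⊗ X)) ≫ A ◁ r :=
        leftUnitor_inv_whiskerRight_naturality α r
    _ = A ◁ (((λ_ X).inv ≫ α ▷ X) ≫ r) := by
        rw [h.leftUnitor_inv_whiskerRight_tensor, ← whiskerLeft_comp]
    _ = 𝟙 (A ⊗ X) := by rw [hr, whiskerLeft_id]

end IsCentral

theorem leftUnitor_inv_whiskerRight_comp_mul_of_comp_eq_one {A M : C} [MonObj M]
    {e : 𝟙_ C ⟶ A} {f : A ⟶ M} (hf : e ≫ f = η) :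
    ((λ_ M).inv ≫ e ▷ M) ≫ f ▷ M ≫ μ = 𝟙 M := by
  rw [Category.assoc, ← comp_whiskerRight_assoc, hf, MonObj.one_mul, Iso.inv_hom_id]

end

/-- If `e : 𝟙 ⟶ R₂` is central, `R₁` is a monoid object, and `f : R₂ ⟶ R₁` is
unit-preserving (`e ≫ f = η`), then `(λ_{R₁})⁻¹ ≫ (e ▷ R₁)` is an isomorphism
with inverse `(f ▷ R₁) ≫ μ`. -/
theorem isIso_of_central_of_unit_map {C : Type*} [Category C] [MonoidalCategory C]
    {R₂ : C} (e : 𝟙_ C ⟶ R₂) (he : IsCentral e) (R₁ : Mon C)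
    (f : R₂ ⟶ R₁.X) (hf : e ≫ f = (MonObj.one : 𝟙_ C ⟶ R₁.X)) :
    IsIso ((λ_ R₁.X).inv ≫ (e ▷ R₁.X)) ∧
      ((λ_ R₁.X).inv ≫ (e ▷ R₁.X)) ≫ ((f ▷ R₁.X) ≫ (MonObj.mul : R₁.X ⊗ R₁.X ⟶ R₁.X)) = 𝟙 R₁.X ∧
      ((f ▷ R₁.X) ≫ (MonObj.mul : R₁.X ⊗ R₁.X ⟶ R₁.X)) ≫ ((λ_ R₁.X).inv ≫ (e ▷ R₁.X)) = 𝟙 (R₂ ⊗ R₁.X) := by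
  have hom_inv := leftUnitor_inv_whiskerRight_comp_mul_of_comp_eq_one hf
  have inv_hom := he.comp_leftUnitor_inv_whiskerRight_eq_id hom_inv
  exact ⟨⟨_, hom_inv, inv_hom⟩, hom_inv, inv_hom⟩
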